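/- arXiv:2507.14244 — 4 statements merged into one kernel-verified Lean document; each statement's English description precedes it below -/
import Mathlib

section
/- Let s ∈ ℕ be a positive integer. Then (i) Range(f_{2s + 1/2}) = {0, s}, and (ii) Range(f_{2s − 1 + 1/2}) = {0, s−1, s}. -/
/-- `f α n = ⌊α² n⌋ - ⌊α ⌊α n⌋⌋` for a real parameter `α` and positive integer `n`. -/
noncomputable def f (α : ℝ) (n : ℕ) : ℤ :=
  ⌊α ^ 2 * (n : ℝ)⌋ - ⌊α * ((⌊α * (n : ℝ)⌋ : ℤ) : ℝ)⌋

/-- `Range (f_α) = {f_α(n) : n ∈ ℕ, n ≥ 1}`. -/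
def Range (α : ℝ) : Set ℤ := {v : ℤ | ∃ n : ℕ, 1 ≤ n ∧ f α n = v}

/-!
Write `α = k + 1/2` with `k ∈ ℤ`. Since `α ⌊α n⌋ = α² n - α · fract (α n)`, we get
`f α n = ⌊α² n⌋ - ⌊α² n - α · fract (α n)⌋`. For even `n`, `α n` is an integer and `f α n = 0`.
For odd `n`, `fract (α n) = 1/2` and `α² n ≡ n/4` modulo `ℤ`, so
`f α n = ⌊n/4⌋ - ⌊(n - 2k - 1)/4⌋`, which equals `⌈k/2⌉ = (k + 1) / 2` for `n ≡ 1` and `⌊k/2⌋ = k / 2` for `n ≡ 3 (mod 4)`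
(floor division in `ℤ`).
-/

lemma f_eq_zero_of_mul_eq_intCast {α : ℝ} {n : ℕ} {m : ℤ} (h : α * n = m) : f α n = 0 := by
  have h_sq : α ^ 2 * n = α * m := by rw [← h]; ring
  rw [f, h, Int.floor_intCast, h_sq, sub_self]

lemma f_eq_floor_sub_floor_sub_mul_fract (α : ℝ) (n : ℕ) :
    f α n = ⌊α ^ 2 * n⌋ - ⌊α ^ 2 * n - α * Int.fract (α * n)⌋ := by
  rw [f, ← Int.self_sub_fract]
  ring_nf

lemma floor_intCast_div_four (z : ℤ) : ⌊(z : ℝ) / 4⌋ = z / 4 := by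
  simpa using Int.floor_div_natCast (z : ℝ) 4

lemma f_intCast_add_half_of_odd (k : ℤ) {n : ℕ} (hn : Odd n) :
    f (k + 1 / 2) n = n / 4 - (n - 2 * k - 1) / 4 := by
  obtain ⟨m, rfl⟩ := hn
  have h_fract : Int.fract (((k : ℝ) + 1 / 2) * ↑(2 * m + 1)) = 1 / 2 := by
    rw [show ((k : ℝ) + 1 / 2) * ↑(2 * m + 1) = ↑(2 * k * m + k + m) + 1 / 2 by push_cast; ring,
      Int.fract_intCast_add, Int.fract_eq_self.mpr ⟨by norm_num, by norm_num⟩]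
  set q : ℤ := (k ^ 2 + k) * (2 * m + 1)
  have h_sq : ((k : ℝ) + 1 / 2) ^ 2 * ↑(2 * m + 1) = q + ((2 * m + 1 : ℕ) : ℤ) / 4 := by
    push_cast [q]; ring
  have h_shift : ((k : ℝ) + 1 / 2) ^ 2 * ↑(2 * m + 1) - (k + 1 / 2) * (1 / 2)
      = q + ((((2 * m + 1 : ℕ) : ℤ) - 2 * k - 1 : ℤ) : ℝ) / 4 := by
    push_cast [q]; ring
  rw [f_eq_floor_sub_floor_sub_mul_fract, h_fract, h_shift, h_sq, Int.floor_intCast_add,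
    Int.floor_intCast_add, floor_intCast_div_four, floor_intCast_div_four]
  ring

lemma range_intCast_add_half (k : ℤ) : Range (k + 1 / 2) = {0, k / 2, (k + 1) / 2} := by
  ext v
  simp only [Range, Set.mem_ofPred_eq, Set.mem_insert_iff, Set.mem_singleton_iff]
  constructor
  · rintro ⟨n, -, rfl⟩
    rcases Nat.even_or_odd' n with ⟨m, rfl | rfl⟩
    · left
      exact f_eq_zero_of_mul_eq_intCast (m := (2 * k + 1) * m) (by push_cast; ring)
    · right
      rw [f_intCast_add_half_of_odd k (odd_two_mul_add_one m)]
      omega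
  · rintro (rfl | rfl | rfl)
    · exact ⟨2, by norm_num, f_eq_zero_of_mul_eq_intCast (m := 2 * k + 1) (by push_cast; ring)⟩
    · refine ⟨3, by norm_num, ?_⟩
      rw [f_intCast_add_half_of_odd k (by decide)]
      omega
    · refine ⟨1, le_rfl, ?_⟩
      rw [f_intCast_add_half_of_odd k odd_one]
      omega

theorem stmt7_general (s : ℕ) :
    Range (2 * (s : ℝ) + 1 / 2) = {0, (s : ℤ)} ∧
    Range (2 * (s : ℝ) - 1 + 1 / 2) = {0, (s : ℤ) - 1, (s : ℤ)} := by
  have h_even := range_intCast_add_half (2 * s)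
  have h_odd := range_intCast_add_half (2 * s - 1)
  push_cast at h_even h_odd
  rw [h_even, h_odd, show (2 * s : ℤ) / 2 = s by omega, show (2 * s + 1 : ℤ) / 2 = s by omega,
    show (2 * s - 1 : ℤ) / 2 = s - 1 by omega, show (2 * s - 1 + 1 : ℤ) / 2 = s by omega,
    Set.pair_eq_singleton]
  exact ⟨rfl, rfl⟩

theorem stmt7 (s : ℕ) (hs : 1 ≤ s) :
    Range (2 * (s : ℝ) + 1 / 2) = {0, (s : ℤ)} ∧
    Range (2 * (s : ℝ) - 1 + 1 / 2) = {0, (s : ℤ) - 1, (s : ℤ)} :=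
  stmt7_general s
end

section
/- Let b ∈ ℕ with b ≥ 2 and s ∈ ℕ a positive integer. Then Range(f_{sb − 1 + 1/b}) = (s·⟦0, b−1⟧) ∪ (s·⟦1, b−1⟧ − {1}) = {sr : 0 ≤ r ≤ b−1} ∪ {sr − 1 : 1 ≤ r ≤ b−1}. -/
theorem f_intCast_div_natCast (p : ℤ) (q n : ℕ) :
    f (p / q) n = p ^ 2 * n / (q ^ 2 : ℕ) - p * (p * n / q) / q := by
  have hpn : (p / q : ℝ) * n = ((p * n : ℤ) : ℝ) / q := by push_cast; ring
  have hp2n : (p / q : ℝ) ^ 2 * n = ((p ^ 2 * n : ℤ) : ℝ) / (q ^ 2 : ℕ) := by push_cast; ring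
  have hpk (k : ℤ) : (p / q : ℝ) * k = ((p * k : ℤ) : ℝ) / q := by push_cast; ring
  rw [f, hpn, hp2n, hpk]
  simp only [Int.floor_div_natCast, Int.floor_intCast]

theorem sq_mul_ediv_sub_mul_mul_ediv {q : ℤ} (hq : q ≠ 0) (p n : ℤ) :
    p ^ 2 * n / q ^ 2 - p * (p * n / q) / q
      = (q * (p * (p * n / q) % q) + p * (p * n % q)) / q ^ 2 := by
  have h : p ^ 2 * n
      = q * (p * (p * n / q) % q) + p * (p * n % q) + q ^ 2 * (p * (p * n / q) / q) := by
    linear_combination (-p) * Int.mul_ediv_add_emod (p * n) q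
      - q * Int.mul_ediv_add_emod (p * (p * n / q)) q
  rw [h, Int.add_mul_ediv_left _ _ (pow_ne_zero 2 hq)]
  ring

section

variable (s : ℤ) {q r R : ℤ}

theorem ediv_sq_eq_of_le (hq : 0 < q) (hr : 0 ≤ r) (hR : R < q) (h : (q - 1) * r ≤ q * R) :
    (q * R + (s * q ^ 2 - q + 1) * r) / q ^ 2 = s * r := by
  rw [Int.ediv_eq_iff_of_pos (by positivity)]
  constructor <;> nlinarith

theorem ediv_sq_eq_of_lt (hr : 0 ≤ r) (hrq : r < q) (hR : 0 ≤ R) (h : q * R < (q - 1) * r) :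
    (q * R + (s * q ^ 2 - q + 1) * r) / q ^ 2 = s * r - 1 := by
  have hq : 0 < q := by omega
  rw [Int.ediv_eq_iff_of_pos (by positivity)]
  constructor <;> nlinarith

theorem emod_mul_ediv_of_eq_mul_add (hr : 0 ≤ r) (hrq : r < q) (m : ℤ) :
    (s * q ^ 2 - q + 1) * (q * m + r) % q = r ∧
      (s * q ^ 2 - q + 1) * ((s * q ^ 2 - q + 1) * (q * m + r) / q) % q = (m - r) % q := by
  set k := (s * q ^ 2 - q + 1) * m + s * q * r - r
  have hk : (s * q ^ 2 - q + 1) * (q * m + r) / q = k ∧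
      (s * q ^ 2 - q + 1) * (q * m + r) % q = r :=
    (Int.ediv_emod_unique (by omega)).2 ⟨by ring, hr, hrq⟩
  refine ⟨hk.2, ?_⟩
  rw [hk.1, show (s * q ^ 2 - q + 1) * k
      = m - r + q * ((s * q - 1) * k + (s * q - 1) * m + s * r) by ring,
    Int.add_mul_emod_self_left]

end

theorem natCast_mul_sub_one_add_one_div_eq (s : ℕ) {b : ℕ} (hb : b ≠ 0) :
    (s : ℝ) * b - 1 + 1 / b = ((s * b ^ 2 - b + 1 : ℤ) : ℝ) / b := by
  push_cast
  field_simp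

theorem stmt13_general (b : ℕ) (hb : 2 ≤ b) (s : ℕ) :
    Range ((s : ℝ) * (b : ℝ) - 1 + 1 / (b : ℝ)) =
      {w : ℤ | ∃ r : ℤ, 0 ≤ r ∧ r ≤ (b : ℤ) - 1 ∧ w = (s : ℤ) * r} ∪
      {w : ℤ | ∃ r : ℤ, 1 ≤ r ∧ r ≤ (b : ℤ) - 1 ∧ w = (s : ℤ) * r - 1} := by
  have hb₀ : (0 : ℤ) < b := by omega
  ext w
  simp only [Range, Set.mem_ofPred_eq, Set.mem_union,
    natCast_mul_sub_one_add_one_div_eq s (by omega : b ≠ 0), f_intCast_div_natCast, Nat.cast_pow,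
    sq_mul_ediv_sub_mul_mul_ediv hb₀.ne']
  constructor
  · rintro ⟨n, -, rfl⟩
    set p : ℤ := s * b ^ 2 - b + 1
    have hr := Int.emod_nonneg (p * n) hb₀.ne'
    have hrb := Int.emod_lt_of_pos (p * n) hb₀
    have hR := Int.emod_nonneg (p * (p * n / b)) hb₀.ne'
    have hRb := Int.emod_lt_of_pos (p * (p * n / b)) hb₀
    rcases le_or_gt ((b - 1) * (p * n % b)) (b * (p * (p * n / b) % b)) with h | h
    · exact .inl ⟨_, hr, by omega, ediv_sq_eq_of_le s hb₀ hr hRb h⟩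
    · exact .inr ⟨_, by nlinarith, by omega, ediv_sq_eq_of_lt s hr hrb hR h⟩
  · rintro (⟨r, hr, hrb, rfl⟩ | ⟨r, hr, hrb, rfl⟩)
    · have hn : 1 ≤ b * (r + b - 1) + r := by nlinarith
      refine ⟨(b * (r + b - 1) + r).toNat, by omega, ?_⟩
      obtain ⟨h₁, h₂⟩ := emod_mul_ediv_of_eq_mul_add s (q := b) hr (by omega) (r + b - 1)
      rw [Int.toNat_of_nonneg (by omega), h₁, h₂, show r + b - 1 - r = b - 1 by ring,
        Int.emod_eq_of_lt (by omega) (by omega)]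
      exact ediv_sq_eq_of_le s hb₀ hr (R := b - 1) (by omega) (by nlinarith)
    · have hn : 1 ≤ b * r + r := by nlinarith
      refine ⟨(b * r + r).toNat, by omega, ?_⟩
      obtain ⟨h₁, h₂⟩ := emod_mul_ediv_of_eq_mul_add s (q := b) (r := r) (by omega) (by omega) r
      rw [Int.toNat_of_nonneg (by omega), h₁, h₂, sub_self, Int.zero_emod]
      exact ediv_sq_eq_of_lt s (R := 0) (by omega) (by omega) le_rfl (by nlinarith)

theorem stmt13 (b : ℕ) (hb : 2 ≤ b) (s : ℕ) (hs : 1 ≤ s) :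
    Range ((s : ℝ) * (b : ℝ) - 1 + 1 / (b : ℝ)) =
      {w : ℤ | ∃ r : ℤ, 0 ≤ r ∧ r ≤ (b : ℤ) - 1 ∧ w = (s : ℤ) * r} ∪
      {w : ℤ | ∃ r : ℤ, 1 ≤ r ∧ r ≤ (b : ℤ) - 1 ∧ w = (s : ℤ) * r - 1} :=
  stmt13_general b hb s
end

section
/- Let p ∈ ℕ and t ∈ ℕ be positive integers such that t is not of the form (s−1)s for any s ∈ ℕ, and let α(t) = (1 + √(1 + 4t))/2. Then Range(f_{p·α(t)}) ⊆ ⟦1, ⌊p·α(t)⌋⟧; more precisely, for every positive integer n, (p·α(t) − p)·⟨p·α(t)·n⟩ < f_{p·α(t)}(n) < p + (p·α(t) − p)·⟨p·α(t)·n⟩, where ⟨x⟩ = x − ⌊x⌋. -/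
/-- The generalized golden ratio `α(t) = (1 + √(1 + 4t))/2`. -/
noncomputable def alphaT (t : ℕ) : ℝ := (1 + Real.sqrt (1 + 4 * (t : ℝ))) / 2

open Int

theorem Irrational.lt_ceil {x : ℝ} (hx : Irrational x) : x < ⌈x⌉ :=
  (Int.le_ceil x).lt_of_ne (hx.ne_int _)

theorem floor_natCast_mul_fract_lt {p : ℕ} (hp : 0 < p) (x : ℝ) : ⌊(p : ℝ) * fract x⌋ < p := by
  rw [Int.floor_lt]
  push_cast
  nlinarith [fract_lt_one x, fract_nonneg x, (Nat.cast_pos.mpr hp : (0 : ℝ) < p)]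

section QuadraticIrrational

variable {β : ℝ} {p q : ℤ}

theorem sub_mul_fract_eq (h : β ^ 2 = p * β + q) (n : ℕ) :
    (β - p) * fract (β * n) = ((p * ⌊β * n⌋ + q * n : ℤ) : ℝ) - β * ⌊β * n⌋ := by
  rw [← Int.self_sub_floor]
  push_cast
  linear_combination (n : ℝ) * h

theorem f_eq_floor_add_ceil (h : β ^ 2 = p * β + q) (n : ℕ) :
    f β n = ⌊(p : ℝ) * fract (β * n)⌋ + ⌈(β - p) * fract (β * n)⌉ := by
  have hsq : β ^ 2 * n = ((p * ⌊β * n⌋ + q * n : ℤ) : ℝ) + p * fract (β * n) := by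
    rw [← Int.self_sub_floor]
    push_cast
    linear_combination (n : ℝ) * h
  have hmul : β * ⌊β * n⌋ = ((p * ⌊β * n⌋ + q * n : ℤ) : ℝ) + -((β - p) * fract (β * n)) := by
    rw [sub_mul_fract_eq h]
    ring
  rw [f, hsq, hmul, floor_intCast_add, floor_intCast_add, floor_neg]
  ring

theorem irrational_sub_mul_fract (hβ : Irrational β) (h : β ^ 2 = p * β + q) {n : ℕ}
    (hn : ⌊β * n⌋ ≠ 0) : Irrational ((β - p) * fract (β * n)) := by
  rw [sub_mul_fract_eq h]
  exact (hβ.mul_intCast hn).intCast_sub _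

end QuadraticIrrational

theorem sub_mul_fract_lt_f_and_f_lt {β : ℝ} {p : ℕ} {q : ℤ} (hp : 0 < p) (hβ : Irrational β)
    (h : β ^ 2 = p * β + q) {n : ℕ} (hn : ⌊β * n⌋ ≠ 0) :
    (β - p) * fract (β * n) < f β n ∧ (f β n : ℝ) < p + (β - p) * fract (β * n) := by
  have h' : β ^ 2 = ((p : ℤ) : ℝ) * β + q := mod_cast h
  have hceil := (irrational_sub_mul_fract hβ h' hn).lt_ceil
  have hceil_lt := ceil_lt_add_one ((β - p) * fract (β * n))
  have hfloor_nonneg : (0 : ℝ) ≤ ⌊(p : ℝ) * fract (β * n)⌋ :=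
    mod_cast floor_nonneg.mpr (by positivity)
  have hfloor_le : (⌊(p : ℝ) * fract (β * n)⌋ : ℝ) ≤ p - 1 := by
    have := floor_natCast_mul_fract_lt hp (β * n)
    exact_mod_cast (by omega : ⌊(p : ℝ) * fract (β * n)⌋ ≤ p - 1)
  rw [f_eq_floor_add_ceil h']
  push_cast at hceil ⊢
  constructor <;> linarith

theorem one_le_and_le_floor_of_bounds {β c : ℝ} {v : ℤ} {p : ℕ} (hpβ : p ≤ β)
    (hc0 : 0 ≤ c) (hc1 : c < 1) (hlo : (β - p) * c < v) (hhi : (v : ℝ) < p + (β - p) * c) :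
    1 ≤ v ∧ v ≤ ⌊β⌋ := by
  constructor
  · have : (0 : ℝ) < v := lt_of_le_of_lt (mul_nonneg (sub_nonneg.mpr hpβ) hc0) hlo
    exact_mod_cast this
  · rw [le_floor]
    nlinarith

theorem alphaT_sq (t : ℕ) : alphaT t ^ 2 = alphaT t + t := by
  have := Real.sq_sqrt (by positivity : (0 : ℝ) ≤ 1 + 4 * t)
  unfold alphaT
  linear_combination this / 4

theorem one_le_alphaT (t : ℕ) : 1 ≤ alphaT t := by
  have : 1 ≤ Real.sqrt (1 + 4 * (t : ℝ)) :=
    Real.one_le_sqrt.mpr (le_add_of_nonneg_right (by positivity))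
  unfold alphaT
  linarith

theorem not_isSquare_one_add_four_mul {t : ℕ} (ht : ∀ s : ℕ, 1 ≤ s → t ≠ (s - 1) * s) :
    ¬ IsSquare (1 + 4 * t) := by
  rintro ⟨k, hk⟩
  obtain ⟨s, rfl⟩ : Odd k := Nat.odd_mul.mp (hk ▸ ⟨2 * t, by ring⟩ : Odd (k * k)) |>.1
  exact ht (s + 1) (by omega) (by simp only [Nat.add_sub_cancel]; nlinarith)

theorem irrational_alphaT {t : ℕ} (ht : ∀ s : ℕ, 1 ≤ s → t ≠ (s - 1) * s) :
    Irrational (alphaT t) := by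
  have hsqrt : Irrational (Real.sqrt ((1 + 4 * t : ℕ) : ℝ)) :=
    irrational_sqrt_natCast_iff.mpr (not_isSquare_one_add_four_mul ht)
  push_cast at hsqrt
  simpa [alphaT] using (hsqrt.intCast_add 1).div_natCast (m := 2) two_ne_zero

theorem stmt16_general (p t : ℕ) (hp : 1 ≤ p)
    (hnf : ∀ s : ℕ, 1 ≤ s → t ≠ (s - 1) * s) :
    Range ((p : ℝ) * alphaT t) ⊆ {m : ℤ | 1 ≤ m ∧ m ≤ ⌊(p : ℝ) * alphaT t⌋} ∧
    ∀ n : ℕ, 1 ≤ n →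
      ((p : ℝ) * alphaT t - (p : ℝ)) * Int.fract ((p : ℝ) * alphaT t * (n : ℝ)) <
          (f ((p : ℝ) * alphaT t) n : ℝ) ∧
      (f ((p : ℝ) * alphaT t) n : ℝ) <
          (p : ℝ) + ((p : ℝ) * alphaT t - (p : ℝ)) * Int.fract ((p : ℝ) * alphaT t * (n : ℝ)) := by
  have hp1 : (1 : ℝ) ≤ p := mod_cast hp
  have hα := one_le_alphaT t
  have hsq : ((p : ℝ) * alphaT t) ^ 2 = p * (p * alphaT t) + ((p ^ 2 * t : ℤ) : ℝ) := by
    push_cast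
    linear_combination (p : ℝ) ^ 2 * alphaT_sq t
  have hirr : Irrational ((p : ℝ) * alphaT t) :=
    (irrational_alphaT hnf).natCast_mul (by omega)
  have hpβ : (p : ℝ) ≤ p * alphaT t := by nlinarith
  have bounds (n : ℕ) (hn : 1 ≤ n) := by
    have hfloor : ⌊(p : ℝ) * alphaT t * n⌋ ≠ 0 := by
      have : (1 : ℝ) ≤ n := mod_cast hn
      exact (floor_pos.mpr (by nlinarith)).ne'
    exact sub_mul_fract_lt_f_and_f_lt (by omega) hirr hsq hfloor
  refine ⟨?_, bounds⟩
  rintro v ⟨n, hn, rfl⟩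
  exact one_le_and_le_floor_of_bounds hpβ (fract_nonneg _) (fract_lt_one _) (bounds n hn).1
    (bounds n hn).2

theorem stmt16 (p t : ℕ) (hp : 1 ≤ p) (ht : 1 ≤ t)
    (hnf : ∀ s : ℕ, 1 ≤ s → t ≠ (s - 1) * s) :
    Range ((p : ℝ) * alphaT t) ⊆ {m : ℤ | 1 ≤ m ∧ m ≤ ⌊(p : ℝ) * alphaT t⌋} ∧
    ∀ n : ℕ, 1 ≤ n →
      ((p : ℝ) * alphaT t - (p : ℝ)) * Int.fract ((p : ℝ) * alphaT t * (n : ℝ)) <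
          (f ((p : ℝ) * alphaT t) n : ℝ) ∧
      (f ((p : ℝ) * alphaT t) n : ℝ) <
          (p : ℝ) + ((p : ℝ) * alphaT t - (p : ℝ)) * Int.fract ((p : ℝ) * alphaT t * (n : ℝ)) :=
  stmt16_general p t hp hnf
end

section
/- Range(f_{√2}) = {1, 2}; that is, for every positive integer n, f_{√2}(n) = 2n − ⌊√2·⌊√2·n⌋⌋ ∈ {1, 2}, and both values 1 and 2 are attained. -/
/-! Writing `m = ⌊α n⌋`, we have `α n - 1 < m ≤ α n`, so `α m` lies in `(α² n - α, α² n]`;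
hence `0 ≤ f α n < α + 1`. For `α = √2` the upper end `α² n = 2n` is an integer which `α m`
never reaches, because `√2 n` is irrational, so `f √2 n ∈ {1, 2}`; `n = 1` and `n = 2` give
both values. -/

section General

variable {α : ℝ} (n : ℕ)

lemma mul_floor_mul_le (hα : 0 ≤ α) : α * ⌊α * n⌋ ≤ α ^ 2 * n := by
  have := mul_le_mul_of_nonneg_left (Int.floor_le (α * n)) hα
  linarith

lemma sub_lt_mul_floor_mul (hα : 0 ≤ α) : α ^ 2 * n - α ≤ α * ⌊α * n⌋ := by
  have := mul_le_mul_of_nonneg_left (Int.sub_one_lt_floor (α * n)).le hα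
  linarith

lemma f_nonneg (hα : 0 ≤ α) : 0 ≤ f α n :=
  sub_nonneg.mpr (Int.floor_mono (mul_floor_mul_le n hα))

lemma f_lt_add_one (hα : 0 ≤ α) : (f α n : ℝ) < α + 1 := by
  have hlo := sub_lt_mul_floor_mul n hα
  have hfloor := Int.lt_floor_add_one (α * ⌊α * n⌋)
  have hle := Int.floor_le (α ^ 2 * n)
  rw [f, Int.cast_sub]
  linarith

lemma f_pos_of_irrational (hα : 0 < α) (hirr : Irrational (α * n)) (k : ℤ)
    (hk : α ^ 2 * n = k) : 0 < f α n := by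
  have hm : (⌊α * n⌋ : ℝ) < α * n := (Int.floor_le _).lt_of_ne (hirr.ne_int _).symm
  have hlt : α * ⌊α * n⌋ < k := by
    rw [← hk]
    nlinarith [mul_lt_mul_of_pos_left hm hα]
  rw [f, hk, Int.floor_intCast, sub_pos]
  exact Int.floor_lt.mpr hlt

end General

lemma f_sqrt_two (n : ℕ) :
    f √2 n = 2 * (n : ℤ) - ⌊√2 * ((⌊√2 * (n : ℝ)⌋ : ℤ) : ℝ)⌋ := by
  rw [f, Real.sq_sqrt zero_le_two, ← Int.floor_intCast (R := ℝ) (2 * n)]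
  push_cast
  rfl

lemma f_sqrt_two_mem {n : ℕ} (hn : 1 ≤ n) : f √2 n = 1 ∨ f √2 n = 2 := by
  have hsqrt : (0 : ℝ) ≤ √2 := Real.sqrt_nonneg 2
  have hpos : 0 < f √2 n :=
    f_pos_of_irrational n (Real.sqrt_pos.mpr two_pos)
      (irrational_sqrt_two.mul_natCast (by omega)) (2 * n)
      (by rw [Real.sq_sqrt zero_le_two]; push_cast; rfl)
  have hlt : (f √2 n : ℝ) < 3 := by
    linarith [f_lt_add_one n hsqrt, Real.sqrt_two_lt_three_halves]
  have : f √2 n < 3 := by exact_mod_cast hlt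
  omega

lemma floor_sqrt_two : ⌊√2⌋ = 1 := by
  norm_num [Int.floor_eq_iff]

lemma floor_sqrt_two_mul_two : ⌊√2 * 2⌋ = 2 := by
  rw [Int.floor_eq_iff]
  norm_num
  linarith [Real.sqrt_two_lt_three_halves]

theorem stmt17 :
    (∀ n : ℕ, 1 ≤ n →
      f (Real.sqrt 2) n = 2 * (n : ℤ) - ⌊Real.sqrt 2 * ((⌊Real.sqrt 2 * (n : ℝ)⌋ : ℤ) : ℝ)⌋) ∧
    Range (Real.sqrt 2) = {1, 2} := by
  refine ⟨fun n _ => f_sqrt_two n, Set.Subset.antisymm ?_ ?_⟩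
  · rintro _ ⟨n, hn, rfl⟩
    exact f_sqrt_two_mem hn
  · rintro _ (rfl | rfl)
    · refine ⟨1, le_rfl, ?_⟩
      simp [f_sqrt_two, floor_sqrt_two]
    · refine ⟨2, one_le_two, ?_⟩
      simp [f_sqrt_two, floor_sqrt_two_mul_two]
end
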